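/- Let q > 2 be a prime power and let s, t₁, t₂ be natural numbers with t₁, t₂ ≥ 1, gcd(s,t₁) = 1 and gcd(s,t₂) = 1. Then the toric codes C_{T(s,t₁)} and C_{T(s,t₂)} over 𝔽_q are monomially equivalent if and only if gcd(t₁, q−1) = gcd(t₂, q−1). -/

import Mathlib

/-!
Monomial equivalence preserves the number of zeros of each codeword, so the largest number of
zeros of a nonzero codeword is an invariant of the code. Let `m = q - 1` and write a codeword as
`A(x) + B(x, y) z` with `A = a + b x` and `B = c + d x^s y^t`; counting the solutions `z` over each
`(x, y)` gives `#zeros + #{A = 0} + #{B = 0} = m² + (m + 1) N`, where `N` counts the common zeros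
of `A` and `B`. As `gcd(s, t) = 1`, `x^s y^t` takes every value exactly `m` times, so `#{B = 0}`
is `0`, `m` or `m²` like `#{A = 0}`. Hence a nonzero codeword has at most `m²` zeros, or
`m² - 2m + (m + 1) N` zeros with `N ≤ gcd(t, m)`, and `(x - 1) + (x^s y^t - 1) z` attains
`N = gcd(t, m)`. The maximum therefore exceeds `m²` exactly when `gcd(t, m) > 1`, and then
determines it.

Conversely, if the gcds agree then `e t₁ ≡ t₂ (mod m)` for some `e` prime to `m`, and the
substitution `y ↦ y^e` maps one code onto the other.
-/

open Finset

/-- The polynomial `a + b·x + c·z + d·x^s·y^t·z` from `T(s,t)`,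
evaluated at `(x,y,z) = (v.1, v.2.1, v.2.2) ∈ (Fˣ)³`. -/
def fT {F : Type} [Field F] (s t : ℕ) (a b c d : F)
    (v : Fˣ × Fˣ × Fˣ) : F :=
  a + b * (v.1 : F) + c * (v.2.2 : F) +
    d * (v.1 : F) ^ s * (v.2.1 : F) ^ t * (v.2.2 : F)

/-- The toric code `C_{T(s,t)}`: all evaluation vectors of polynomials
`a + b·x + c·z + d·x^s·y^t·z` on `(Fˣ)³`. -/
def toricCodeT (F : Type) [Field F] (s t : ℕ) : Set (Fˣ × Fˣ × Fˣ → F) :=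
  {w | ∃ a b c d : F, w = fT s t a b c d}

/-- Monomial equivalence of two codes indexed by `(Fˣ)³`: there is a
permutation `π` of the index set and a nonzero scalar `lam v` for each index
`v` such that `C₂ = { v ↦ lam v * c (π v) : c ∈ C₁ }`. -/
def MonomiallyEquiv {F : Type} [Field F]
    (C₁ C₂ : Set (Fˣ × Fˣ × Fˣ → F)) : Prop :=
  ∃ (π : Equiv.Perm (Fˣ × Fˣ × Fˣ)) (lam : Fˣ × Fˣ × Fˣ → Fˣ),
    C₂ = {w | ∃ c ∈ C₁, w = fun v => (lam v : F) * c (π v)}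

noncomputable def zeroCount {ι R : Type*} [Zero R] (w : ι → R) : ℕ :=
  Nat.card {i // w i = 0}

section ZeroCount

variable {ι R : Type*} [MonoidWithZero R]

lemma zeroCount_zero : zeroCount (0 : ι → R) = Nat.card ι :=
  Nat.card_congr (Equiv.subtypeUnivEquiv fun _ => rfl)

lemma ne_zero_of_zeroCount_lt {w : ι → R} (h : zeroCount w < Nat.card ι) : w ≠ 0 := by
  rintro rfl
  exact h.ne zeroCount_zero

lemma zeroCount_units_mul_comp (π : ι ≃ ι) (lam : ι → Rˣ) (w : ι → R) :
    zeroCount (fun i => (lam i : R) * w (π i)) = zeroCount w :=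
  Nat.card_congr <| (Equiv.subtypeEquivRight fun i => Units.mul_right_eq_zero (lam i)).trans
    (π.subtypeEquiv fun _ => Iff.rfl)

lemma units_mul_comp_eq_zero_iff (π : ι ≃ ι) (lam : ι → Rˣ) (w : ι → R) :
    (fun i => (lam i : R) * w (π i)) = 0 ↔ w = 0 := by
  simp only [funext_iff, Pi.zero_apply, Units.mul_right_eq_zero]
  exact π.forall_congr_right (q := fun i => w i = 0)

end ZeroCount

lemma MonomiallyEquiv.zeroCount_image_eq {F : Type} [Field F] {C₁ C₂ : Set (Fˣ × Fˣ × Fˣ → F)}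
    (h : MonomiallyEquiv C₁ C₂) : zeroCount '' (C₁ \ {0}) = zeroCount '' (C₂ \ {0}) := by
  obtain ⟨π, lam, rfl⟩ := h
  ext n
  simp only [Set.mem_image, Set.mem_sdiff, Set.mem_singleton_iff, Set.mem_ofPred_eq]
  constructor
  · rintro ⟨w, ⟨hw, hw0⟩, rfl⟩
    exact ⟨_, ⟨⟨w, hw, rfl⟩, (units_mul_comp_eq_zero_iff π lam w).not.2 hw0⟩,
      zeroCount_units_mul_comp π lam w⟩
  · rintro ⟨_, ⟨⟨w, hw, rfl⟩, hw0⟩, rfl⟩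
    exact ⟨w, ⟨hw, (units_mul_comp_eq_zero_iff π lam w).not.1 hw0⟩,
      (zeroCount_units_mul_comp π lam w).symm⟩

lemma IsCyclic.card_pow_eq_one (G : Type*) [CommGroup G] [IsCyclic G] [Finite G] (t : ℕ) :
    Nat.card {y : G // y ^ t = 1} = t.gcd (Nat.card G) := by
  rw [Nat.gcd_comm, ← IsCyclic.card_powMonoidHom_ker]
  rfl

lemma MonoidHom.card_fiber_mul_card_of_surjective {G H : Type*} [Group G] [Group H] [Finite G]
    (f : G →* H) (hf : Function.Surjective f) (h : H) :
    Nat.card {g // f g = h} * Nat.card H = Nat.card G := by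
  obtain ⟨g₀, rfl⟩ := hf h
  have fiber_equiv_ker : {g // f g = f g₀} ≃ f.ker :=
    { toFun g := ⟨g₀⁻¹ * g, by simp [g.2]⟩
      invFun g := ⟨g₀ * g, by simp [f.mem_ker.1 g.2]⟩
      left_inv g := by simp
      right_inv g := by simp }
  rw [Nat.card_congr fiber_equiv_ker, ← Subgroup.card_top (G := H),
    ← f.range_eq_top_of_surjective hf, ← Subgroup.index_ker, Subgroup.card_mul_index]

lemma card_pow_mul_pow_eq {G : Type*} [CommGroup G] [Finite G] {s t : ℕ} (hst : s.gcd t = 1)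
    (α : G) : Nat.card {p : G × G // p.1 ^ s * p.2 ^ t = α} = Nat.card G := by
  let χ : G × G →* G :=
    (powMonoidHom s).comp (MonoidHom.fst G G) * (powMonoidHom t).comp (MonoidHom.snd G G)
  have hχ : Function.Surjective χ := fun α => by
    refine ⟨(α ^ s.gcdA t, α ^ s.gcdB t), ?_⟩
    have bezout := Nat.gcd_eq_gcd_ab s t
    rw [hst, Nat.cast_one] at bezout
    simp only [χ, MonoidHom.mul_apply, MonoidHom.comp_apply, powMonoidHom_apply,
      MonoidHom.coe_fst, MonoidHom.coe_snd, ← zpow_natCast, ← zpow_mul, ← zpow_add]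
    rw [mul_comm (s.gcdA t), mul_comm (s.gcdB t), ← bezout, zpow_one]
  have := χ.card_fiber_mul_card_of_surjective hχ α
  rw [Nat.card_prod] at this
  exact Nat.eq_of_mul_eq_mul_right Nat.card_pos this

lemma card_subtype_comp_of_card_fiber {X Y : Type*} [Finite X] (f : X → Y) {k : ℕ}
    (hf : ∀ y, Nat.card {x // f x = y} = k) (P : Y → Prop) [Finite {y // P y}] :
    Nat.card {x // P (f x)} = k * Nat.card {y // P y} := by
  have := Fintype.ofFinite {y // P y}
  rw [← Nat.card_congr (Equiv.sigmaSubtypeFiberEquivSubtype f fun _ => Iff.rfl), Nat.card_sigma]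
  simp [hf, mul_comm]

lemma exists_coprime_mul_modEq_of_gcd_eq {a b m : ℕ} (hm : m ≠ 0) (h : a.gcd m = b.gcd m) :
    ∃ e, e.Coprime m ∧ e * a ≡ b [MOD m] := by
  have hg : 0 < a.gcd m := Nat.gcd_pos_of_pos_right _ (Nat.pos_of_ne_zero hm)
  obtain ⟨a', m', ha', ha, hm'⟩ := Nat.exists_coprime a m
  obtain ⟨b', m'', hb', hb, hm''⟩ := Nat.exists_coprime b m
  rw [← h] at hb hm''
  obtain rfl : m' = m'' := Nat.eq_of_mul_eq_mul_right hg (hm'.symm.trans hm'')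
  have : NeZero m := ⟨hm⟩
  have hdvd : m' ∣ m := Dvd.intro _ hm'.symm
  obtain ⟨U, hU⟩ := ZMod.unitsMap_surjective hdvd
    (ZMod.unitOfCoprime b' hb' * (ZMod.unitOfCoprime a' ha')⁻¹)
  refine ⟨(U : ZMod m).val, ZMod.val_coe_unit_coprime U, ?_⟩
  have hU' : ((U : ZMod m).val : ZMod m') =
      (ZMod.unitOfCoprime b' hb' * (ZMod.unitOfCoprime a' ha')⁻¹ : (ZMod m')ˣ) := by
    rw [ZMod.natCast_val, ← ZMod.unitsMap_val hdvd, hU]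
  have key : (U : ZMod m).val * a' ≡ b' [MOD m'] := by
    rw [← ZMod.natCast_eq_natCast_iff, Nat.cast_mul, hU', Units.val_mul, mul_assoc,
      ← ZMod.coe_unitOfCoprime a' ha', Units.inv_mul, mul_one, ZMod.coe_unitOfCoprime]
  have := key.mul_right' (a.gcd m)
  rwa [mul_assoc, ← ha, ← hb, ← hm'] at this

lemma exists_equiv_pow_eq_pow {G : Type*} [Group G] [Finite G] {t₁ t₂ : ℕ}
    (h : t₁.gcd (Nat.card G) = t₂.gcd (Nat.card G)) : ∃ σ : G ≃ G, ∀ y, σ y ^ t₁ = y ^ t₂ := by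
  obtain ⟨e, he, hmod⟩ := exists_coprime_mul_modEq_of_gcd_eq Nat.card_pos.ne' h
  refine ⟨powCoprime he.symm, fun y => ?_⟩
  rw [powCoprime_apply, ← pow_mul, ← pow_mod_natCard, hmod, pow_mod_natCard]

lemma card_subtype_eq_sum_ite {X : Type*} [Fintype X] (P : X → Prop) [DecidablePred P] :
    Nat.card {x // P x} = ∑ x, if P x then 1 else 0 := by
  rw [Nat.card_eq_fintype_card, Fintype.card_subtype, card_filter]

section LinearEquation

variable {F : Type*} [Field F]

lemma card_units_add_mul_eq_zero_of_ne_zero {α β : F} (hα : α ≠ 0) (hβ : β ≠ 0) :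
    Nat.card {z : Fˣ // α + β * z = 0} = 1 := by
  rw [Nat.card_eq_one_iff_exists]
  refine ⟨⟨Units.mk0 (-α / β) (by simp [hα, hβ]), ?_⟩, ?_⟩
  · rw [Units.val_mk0, mul_div_cancel₀ _ hβ, add_neg_cancel]
  rintro ⟨z, hz⟩
  ext
  simp only [Units.val_mk0]
  field_simp
  linear_combination hz

lemma card_units_add_mul_eq_zero_add_ite [DecidableEq F] (α β : F) :
    Nat.card {z : Fˣ // α + β * z = 0} + (if α = 0 then 1 else 0) + (if β = 0 then 1 else 0) =
      1 + (Nat.card Fˣ + 1) * if α = 0 ∧ β = 0 then 1 else 0 := by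
  by_cases hα : α = 0 <;> by_cases hβ : β = 0
  · simp [hα, hβ]
    ring
  · simp [hα, hβ]
  · simp [hα, hβ]
  · simp [hα, hβ, card_units_add_mul_eq_zero_of_ne_zero hα hβ]

variable [Finite F]

lemma card_units_add_mul_eq_zero_le_one {α β : F} (h : ¬(α = 0 ∧ β = 0)) :
    Nat.card {z : Fˣ // α + β * z = 0} ≤ 1 := by
  refine Finite.card_le_one_iff_subsingleton.2 ⟨fun ⟨z₁, h₁⟩ ⟨z₂, h₂⟩ => ?_⟩
  have hβ : β ≠ 0 := fun hβ => h ⟨by simpa [hβ] using h₁, hβ⟩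
  ext
  exact mul_left_cancel₀ hβ (by linear_combination h₁ - h₂)

lemma card_add_mul_eq_zero_add_card_add_card {X : Type*} [Finite X] (A B : X → F) :
    Nat.card {q : X × Fˣ // A q.1 + B q.1 * q.2 = 0} + Nat.card {p // A p = 0} +
        Nat.card {p // B p = 0} =
      Nat.card X + (Nat.card Fˣ + 1) * Nat.card {p // A p = 0 ∧ B p = 0} := by
  classical
  have := Fintype.ofFinite X
  rw [Nat.card_congr (Equiv.subtypeProdEquivSigmaSubtype fun p (z : Fˣ) => A p + B p * z = 0),
    Nat.card_sigma]
  simp only [card_subtype_eq_sum_ite, Nat.card_eq_fintype_card (α := X),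
    Fintype.card_eq_sum_ones, mul_sum]
  rw [← sum_add_distrib, ← sum_add_distrib, ← sum_add_distrib]
  exact sum_congr rfl fun p _ => card_units_add_mul_eq_zero_add_ite (A p) (B p)

end LinearEquation

section ToricCount

variable {F : Type} [Field F]

-- `fT s t a b c d (x, y, z) = fTCoeff0 a b (x, y) + fTCoeff1 s t c d (x, y) * z`
def fTCoeff0 (a b : F) (p : Fˣ × Fˣ) : F := a + b * p.1

def fTCoeff1 (s t : ℕ) (c d : F) (p : Fˣ × Fˣ) : F := c + d * (p.1 : F) ^ s * (p.2 : F) ^ t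

lemma card_fTCoeff0_eq_zero (a b : F) :
    Nat.card {p // fTCoeff0 a b p = 0} = Nat.card Fˣ * Nat.card {x : Fˣ // a + b * x = 0} := by
  rw [mul_comm, ← Nat.card_prod]
  exact Nat.card_congr (Equiv.prodSubtypeFstEquivSubtypeProd (p := fun x : Fˣ => a + b * x = 0))

variable [Finite F]

lemma zeroCount_fT_add_card_add_card (s t : ℕ) (a b c d : F) :
    zeroCount (fT s t a b c d) + Nat.card {p // fTCoeff0 a b p = 0} +
        Nat.card {p // fTCoeff1 s t c d p = 0} =
      Nat.card Fˣ ^ 2 +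
        (Nat.card Fˣ + 1) * Nat.card {p // fTCoeff0 a b p = 0 ∧ fTCoeff1 s t c d p = 0} := by
  have hsplit : zeroCount (fT s t a b c d) =
      Nat.card {q : (Fˣ × Fˣ) × Fˣ // fTCoeff0 a b q.1 + fTCoeff1 s t c d q.1 * q.2 = 0} :=
    Nat.card_congr <| ((Equiv.prodAssoc _ _ _).symm.subtypeEquiv fun v => by
      simp only [fT, fTCoeff0, fTCoeff1, Equiv.prodAssoc_symm_apply]
      ring_nf)
  rw [hsplit, card_add_mul_eq_zero_add_card_add_card, Nat.card_prod, sq]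

lemma card_fTCoeff1_eq_zero {s t : ℕ} (hst : s.gcd t = 1) (c d : F) :
    Nat.card {p // fTCoeff1 s t c d p = 0} = Nat.card Fˣ * Nat.card {u : Fˣ // c + d * u = 0} := by
  have hcoe (p : Fˣ × Fˣ) : fTCoeff1 s t c d p = c + d * ((p.1 ^ s * p.2 ^ t : Fˣ) : F) := by
    simp only [fTCoeff1, Units.val_mul, Units.val_pow_eq_pow_val, mul_assoc]
  simp only [hcoe]
  exact card_subtype_comp_of_card_fiber (fun p : Fˣ × Fˣ => p.1 ^ s * p.2 ^ t)
    (card_pow_mul_pow_eq hst) (fun u : Fˣ => c + d * u = 0)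

lemma card_common_zeros_le_gcd {s t : ℕ} {a b c d : F} (hab : ¬(a = 0 ∧ b = 0))
    (hcd : ¬(c = 0 ∧ d = 0)) :
    Nat.card {p // fTCoeff0 a b p = 0 ∧ fTCoeff1 s t c d p = 0} ≤ t.gcd (Nat.card Fˣ) := by
  rw [← IsCyclic.card_pow_eq_one]
  rcases isEmpty_or_nonempty {p // fTCoeff0 a b p = 0 ∧ fTCoeff1 s t c d p = 0} with
    _ | ⟨p₀, hA₀, hB₀⟩
  · simp
  simp only [fTCoeff0, fTCoeff1] at hA₀ hB₀
  have hb : b ≠ 0 := fun hb => hab ⟨by simpa [hb] using hA₀, hb⟩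
  have hd : d ≠ 0 := fun hd => hcd ⟨by simpa [hd] using hB₀, hd⟩
  have fst_eq {p : Fˣ × Fˣ} (hp : fTCoeff0 a b p = 0) : p.1 = p₀.1 :=
    Units.ext <| mul_left_cancel₀ hb (by simp only [fTCoeff0] at hp; linear_combination hp - hA₀)
  have snd_pow_eq {p : Fˣ × Fˣ} (hA : fTCoeff0 a b p = 0) (hB : fTCoeff1 s t c d p = 0) :
      (p.2 : F) ^ t = (p₀.2 : F) ^ t := by
    have hx : d * (p₀.1 : F) ^ s ≠ 0 := mul_ne_zero hd (pow_ne_zero _ p₀.1.ne_zero)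
    simp only [fTCoeff1, fst_eq hA] at hB
    exact mul_left_cancel₀ hx (by linear_combination hB - hB₀)
  refine Nat.card_le_card_of_injective (fun p => ⟨p.1.2 / p₀.2, ?_⟩) fun p q hpq => ?_
  · rw [div_pow, div_eq_one, Units.ext_iff, Units.val_pow_eq_pow_val, Units.val_pow_eq_pow_val]
    exact snd_pow_eq p.2.1 p.2.2
  · have h2 : p.1.2 = q.1.2 := div_left_inj.1 (congrArg Subtype.val hpq)
    exact Subtype.ext (Prod.ext ((fst_eq p.2.1).trans (fst_eq q.2.1).symm) h2)

lemma card_common_zeros_eq_gcd (s t : ℕ) :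
    Nat.card {p // fTCoeff0 (-1 : F) 1 p = 0 ∧ fTCoeff1 s t (-1 : F) 1 p = 0} =
      t.gcd (Nat.card Fˣ) := by
  have common_zero_iff (p : Fˣ × Fˣ) :
      fTCoeff0 (-1 : F) 1 p = 0 ∧ fTCoeff1 s t (-1 : F) 1 p = 0 ↔ p.1 = 1 ∧ p.2 ^ t = 1 := by
    simp only [fTCoeff0, fTCoeff1, Units.ext_iff, Units.val_pow_eq_pow_val, Units.val_one,
      neg_add_eq_zero, one_mul, eq_comm (a := (1 : F))]
    constructor
    · rintro ⟨h1, h2⟩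
      simpa [h1] using h2
    · rintro ⟨h1, h2⟩
      simp [h1, h2]
  rw [← IsCyclic.card_pow_eq_one]
  exact Nat.card_congr <| (Equiv.subtypeEquivRight common_zero_iff).trans
    { toFun p := ⟨p.1.2, p.2.2⟩
      invFun y := ⟨(1, y), rfl, y.2⟩
      left_inv p := Subtype.ext (Prod.ext p.2.1.symm rfl)
      right_inv y := rfl }

lemma card_common_zeros_le_left (s t : ℕ) (a b c d : F) :
    Nat.card {p // fTCoeff0 a b p = 0 ∧ fTCoeff1 s t c d p = 0} ≤
      Nat.card Fˣ * Nat.card {x : Fˣ // a + b * x = 0} :=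
  (Nat.card_mono (Set.toFinite _) fun _ hp => hp.1).trans_eq (card_fTCoeff0_eq_zero a b)

lemma card_common_zeros_le_right {s t : ℕ} (hst : s.gcd t = 1) (a b c d : F) :
    Nat.card {p // fTCoeff0 a b p = 0 ∧ fTCoeff1 s t c d p = 0} ≤
      Nat.card Fˣ * Nat.card {u : Fˣ // c + d * u = 0} :=
  (Nat.card_mono (Set.toFinite _) fun _ hp => hp.2).trans_eq (card_fTCoeff1_eq_zero hst c d)

lemma zeroCount_fT_zero_zero_le {s t : ℕ} (hst : s.gcd t = 1) {c d : F}
    (hcd : ¬(c = 0 ∧ d = 0)) : zeroCount (fT s t 0 0 c d) ≤ Nat.card Fˣ ^ 2 := by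
  have key := zeroCount_fT_add_card_add_card s t 0 0 c d
  rw [card_fTCoeff0_eq_zero, card_fTCoeff1_eq_zero hst] at key
  simp only [zero_mul, add_zero, Nat.card_subtype_true] at key
  have hS := card_common_zeros_le_right hst (0 : F) 0 c d
  have hL := card_units_add_mul_eq_zero_le_one hcd
  nlinarith [Nat.mul_le_mul_left (Nat.card Fˣ + 1) hS, Nat.mul_le_mul_left (Nat.card Fˣ ^ 2) hL]

lemma zeroCount_fT_le_of_zero_zero {s t : ℕ} {a b : F} (hab : ¬(a = 0 ∧ b = 0)) :
    zeroCount (fT s t a b 0 0) ≤ Nat.card Fˣ ^ 2 := by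
  have key := zeroCount_fT_add_card_add_card s t a b 0 0
  rw [card_fTCoeff0_eq_zero] at key
  have hS := card_common_zeros_le_left s t a b (0 : F) 0
  simp only [fTCoeff1, zero_mul, add_zero, and_true, Nat.card_subtype_true, Nat.card_prod]
    at key hS
  have hL := card_units_add_mul_eq_zero_le_one hab
  nlinarith [Nat.mul_le_mul_left (Nat.card Fˣ + 1) hS, Nat.mul_le_mul_left (Nat.card Fˣ ^ 2) hL]

lemma zeroCount_fT_le {s t : ℕ} (hst : s.gcd t = 1) {a b c d : F}
    (h : ¬(a = 0 ∧ b = 0 ∧ c = 0 ∧ d = 0)) :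
    zeroCount (fT s t a b c d) ≤ Nat.card Fˣ ^ 2 ∨
      zeroCount (fT s t a b c d) + 2 * Nat.card Fˣ ≤
        Nat.card Fˣ ^ 2 + (Nat.card Fˣ + 1) * t.gcd (Nat.card Fˣ) := by
  by_cases hab : a = 0 ∧ b = 0
  · obtain ⟨rfl, rfl⟩ := hab
    exact .inl (zeroCount_fT_zero_zero_le hst (by tauto))
  by_cases hcd : c = 0 ∧ d = 0
  · obtain ⟨rfl, rfl⟩ := hcd
    exact .inl (zeroCount_fT_le_of_zero_zero hab)
  have key := zeroCount_fT_add_card_add_card s t a b c d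
  rw [card_fTCoeff0_eq_zero, card_fTCoeff1_eq_zero hst] at key
  have hSA := card_common_zeros_le_left s t a b c d
  have hSB := card_common_zeros_le_right hst a b c d
  have hLA := card_units_add_mul_eq_zero_le_one hab
  have hLB := card_units_add_mul_eq_zero_le_one hcd
  set m := Nat.card Fˣ
  set S := Nat.card {p // fTCoeff0 a b p = 0 ∧ fTCoeff1 s t c d p = 0}
  rcases Nat.eq_zero_or_pos S with hS | hS
  · left
    rw [hS] at key
    omega
  right
  -- a common zero forces both `a + b x` and `c + d u` to have their (unique) zero in `Fˣ`
  have hLA1 : Nat.card {x : Fˣ // a + b * x = 0} = 1 := by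
    refine le_antisymm hLA (Nat.one_le_iff_ne_zero.2 fun h0 => ?_)
    rw [h0] at hSA
    omega
  have hLB1 : Nat.card {u : Fˣ // c + d * u = 0} = 1 := by
    refine le_antisymm hLB (Nat.one_le_iff_ne_zero.2 fun h0 => ?_)
    rw [h0] at hSB
    omega
  have hSg : S ≤ t.gcd m := card_common_zeros_le_gcd hab hcd
  rw [hLA1, hLB1] at key
  nlinarith

lemma zeroCount_fT_witness {s t : ℕ} (hst : s.gcd t = 1) :
    zeroCount (fT s t (-1 : F) 1 (-1) 1) + 2 * Nat.card Fˣ =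
      Nat.card Fˣ ^ 2 + (Nat.card Fˣ + 1) * t.gcd (Nat.card Fˣ) := by
  have key := zeroCount_fT_add_card_add_card s t (-1 : F) 1 (-1) 1
  have hL := card_units_add_mul_eq_zero_of_ne_zero (neg_ne_zero.2 one_ne_zero)
    (one_ne_zero (α := F))
  rw [card_fTCoeff0_eq_zero, card_fTCoeff1_eq_zero hst, card_common_zeros_eq_gcd, hL] at key
  linarith

lemma gcd_le_of_zeroCount_image_subset {s t₁ t₂ : ℕ}
    (hst₁ : s.gcd t₁ = 1) (hst₂ : s.gcd t₂ = 1)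
    (h : zeroCount '' (toricCodeT F s t₂ \ {0}) ⊆ zeroCount '' (toricCodeT F s t₁ \ {0})) :
    t₂.gcd (Nat.card Fˣ) ≤ t₁.gcd (Nat.card Fˣ) := by
  set m := Nat.card Fˣ
  have hm : 0 < m := Nat.card_pos
  have hg₁ : 0 < t₁.gcd m := Nat.gcd_pos_of_pos_right _ hm
  have hg₂m : t₂.gcd m ≤ m := Nat.gcd_le_right _ hm
  by_cases hg₂ : t₂.gcd m ≤ 1
  · omega
  have hw := zeroCount_fT_witness (F := F) hst₂
  have hw0 : fT s t₂ (-1 : F) 1 (-1) 1 ≠ 0 := by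
    refine ne_zero_of_zeroCount_lt ?_
    rw [Nat.card_prod, Nat.card_prod]
    nlinarith
  obtain ⟨_, ⟨⟨a, b, c, d, rfl⟩, hw0'⟩, hZ⟩ := h ⟨_, ⟨⟨-1, 1, -1, 1, rfl⟩, hw0⟩, rfl⟩
  have hcoeff : ¬(a = 0 ∧ b = 0 ∧ c = 0 ∧ d = 0) := by
    rintro ⟨rfl, rfl, rfl, rfl⟩
    exact hw0' (funext fun v => by simp [fT])
  -- the witness has more than `m²` zeros, which rules out the first alternative
  rcases zeroCount_fT_le hst₁ hcoeff with hle | hle <;> rw [hZ] at hle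
  · nlinarith
  · exact Nat.le_of_mul_le_mul_left (by linarith) (Nat.succ_pos m)

end ToricCount

lemma monomiallyEquiv_toricCodeT_of_equiv {F : Type} [Field F] {s t₁ t₂ : ℕ} (σ : Fˣ ≃ Fˣ)
    (hσ : ∀ y, σ y ^ t₁ = y ^ t₂) : MonomiallyEquiv (toricCodeT F s t₁) (toricCodeT F s t₂) := by
  let π := (Equiv.refl Fˣ).prodCongr (σ.prodCongr (Equiv.refl Fˣ))
  have hcomp (a b c d : F) :
      (fun v => ((1 : Fˣ × Fˣ × Fˣ → Fˣ) v : F) * fT s t₁ a b c d (π v)) = fT s t₂ a b c d := by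
    funext v
    simp [fT, π, ← Units.val_pow_eq_pow_val, hσ]
  refine ⟨π, 1, ?_⟩
  ext w
  constructor
  · rintro ⟨a, b, c, d, rfl⟩
    exact ⟨_, ⟨a, b, c, d, rfl⟩, (hcomp a b c d).symm⟩
  · rintro ⟨_, ⟨a, b, c, d, rfl⟩, rfl⟩
    exact ⟨a, b, c, d, hcomp a b c d⟩

theorem stmt5_general (F : Type) [Field F] [Fintype F] (s t₁ t₂ : ℕ)
    (hst₁ : Nat.gcd s t₁ = 1) (hst₂ : Nat.gcd s t₂ = 1) :
    MonomiallyEquiv (toricCodeT F s t₁) (toricCodeT F s t₂) ↔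
      Nat.gcd t₁ (Fintype.card F - 1) = Nat.gcd t₂ (Fintype.card F - 1) := by
  classical
  rw [← Fintype.card_units, ← Nat.card_eq_fintype_card]
  refine ⟨fun h => ?_, fun h => ?_⟩
  · have hC := h.zeroCount_image_eq
    exact le_antisymm (gcd_le_of_zeroCount_image_subset hst₂ hst₁ hC.le)
      (gcd_le_of_zeroCount_image_subset hst₁ hst₂ hC.ge)
  · obtain ⟨σ, hσ⟩ := exists_equiv_pow_eq_pow h
    exact monomiallyEquiv_toricCodeT_of_equiv σ hσ

/-- `C_{T(s,t₁)}` and `C_{T(s,t₂)}` are monomially equivalent iff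
`gcd(t₁, q−1) = gcd(t₂, q−1)`. -/
theorem stmt5 (F : Type) [Field F] [Fintype F] (s t₁ t₂ : ℕ)
    (hq : 2 < Fintype.card F) (ht₁ : 1 ≤ t₁) (ht₂ : 1 ≤ t₂)
    (hst₁ : Nat.gcd s t₁ = 1) (hst₂ : Nat.gcd s t₂ = 1) :
    MonomiallyEquiv (toricCodeT F s t₁) (toricCodeT F s t₂) ↔
      Nat.gcd t₁ (Fintype.card F - 1) = Nat.gcd t₂ (Fintype.card F - 1) :=
  stmt5_general F s t₁ t₂ hst₁ hst₂
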